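/- If G is a 1-factorable graph and H is a regular graph, then the strong tensor product G ⊗ H is 1-factorable. -/

import Mathlib

open SimpleGraph

/-- `c` is an interval `t`-coloring of `G`: edges get colors in `{1,…,t}`, every color
`1,…,t` is used, adjacent edges get distinct colors, and the set of colors of edges
incident to any vertex is an interval of integers. -/
def IsIntervalColoring {V : Type*} (G : SimpleGraph V) (t : ℕ) (c : Sym2 V → ℕ) : Prop :=
  (∀ e ∈ G.edgeSet, 1 ≤ c e ∧ c e ≤ t) ∧
  (∀ i, 1 ≤ i → i ≤ t → ∃ e ∈ G.edgeSet, c e = i) ∧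
  (∀ v w₁ w₂, G.Adj v w₁ → G.Adj v w₂ → w₁ ≠ w₂ → c s(v, w₁) ≠ c s(v, w₂)) ∧
  (∀ v i j k, (∃ w, G.Adj v w ∧ c s(v, w) = i) → (∃ w, G.Adj v w ∧ c s(v, w) = k) →
    i ≤ j → j ≤ k → ∃ w, G.Adj v w ∧ c s(v, w) = j)

/-- `G` has an interval `t`-coloring. -/
def HasIntervalColoring {V : Type*} (G : SimpleGraph V) (t : ℕ) : Prop :=
  ∃ c : Sym2 V → ℕ, IsIntervalColoring G t c

/-- `G` is interval colorable (`G ∈ 𝔑`). -/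
def IntervalColorable {V : Type*} (G : SimpleGraph V) : Prop :=
  ∃ t : ℕ, 1 ≤ t ∧ HasIntervalColoring G t

/-- `w G`: the least number of colors in an interval coloring of `G`. -/
noncomputable def wNum {V : Type*} (G : SimpleGraph V) : ℕ :=
  sInf {t | HasIntervalColoring G t}

/-- `W G`: the greatest number of colors in an interval coloring of `G`. -/
noncomputable def WNum {V : Type*} (G : SimpleGraph V) : ℕ :=
  sSup {t | HasIntervalColoring G t}

/-- `G` is `r`-regular: every vertex has exactly `r` neighbors. -/
def IsRegularGraph {V : Type*} (G : SimpleGraph V) (r : ℕ) : Prop :=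
  ∀ v : V, (G.neighborSet v).ncard = r

/-- `c` is a proper edge coloring of `G` using colors `0,…,k-1`. -/
def IsProperEdgeColoring {V : Type*} (G : SimpleGraph V) (k : ℕ) (c : Sym2 V → ℕ) : Prop :=
  (∀ e ∈ G.edgeSet, c e < k) ∧
  (∀ v w₁ w₂, G.Adj v w₁ → G.Adj v w₂ → w₁ ≠ w₂ → c s(v, w₁) ≠ c s(v, w₂))

/-- The chromatic index `χ'(G)`. -/
noncomputable def edgeChromaticNumber {V : Type*} (G : SimpleGraph V) : ℕ :=
  sInf {k | ∃ c : Sym2 V → ℕ, IsProperEdgeColoring G k c}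

/-- `G` is 1-factorable: its edge set decomposes into perfect matchings. -/
def IsOneFactorable {V : Type*} (G : SimpleGraph V) : Prop :=
  ∃ (n : ℕ) (f : Fin n → SimpleGraph.Subgraph G),
    (∀ i, (f i).IsPerfectMatching) ∧
    (∀ e ∈ G.edgeSet, ∃! i, e ∈ (f i).edgeSet)

/-- The tensor (direct) product `G × H`. -/
def tensorProd {α β : Type*} (G : SimpleGraph α) (H : SimpleGraph β) :
    SimpleGraph (α × β) where
  Adj p q := G.Adj p.1 q.1 ∧ H.Adj p.2 q.2
  symm := .mk fun p q ⟨h₁, h₂⟩ => ⟨h₁.symm, h₂.symm⟩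
  loopless := .mk fun p h => G.loopless.irrefl p.1 h.1

/-- The strong tensor (semistrong) product `G ⊗ H`. -/
def strongTensorProd {α β : Type*} (G : SimpleGraph α) (H : SimpleGraph β) :
    SimpleGraph (α × β) where
  Adj p q := (G.Adj p.1 q.1 ∧ H.Adj p.2 q.2) ∨ (p.2 = q.2 ∧ G.Adj p.1 q.1)
  symm := .mk fun p q h => by
    rcases h with ⟨h₁, h₂⟩ | ⟨h₁, h₂⟩
    · exact Or.inl ⟨h₁.symm, h₂.symm⟩
    · exact Or.inr ⟨h₁.symm, h₂.symm⟩
  loopless := .mk fun p h => by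
    rcases h with ⟨h₁, _⟩ | ⟨_, h₁⟩ <;> exact G.loopless.irrefl p.1 h₁

/-- The strong product `G ⊠ H`. -/
def strongProd {α β : Type*} (G : SimpleGraph α) (H : SimpleGraph β) :
    SimpleGraph (α × β) where
  Adj p q := (G.Adj p.1 q.1 ∧ H.Adj p.2 q.2) ∨ (p.1 = q.1 ∧ H.Adj p.2 q.2) ∨
    (p.2 = q.2 ∧ G.Adj p.1 q.1)
  symm := .mk fun p q h => by
    rcases h with ⟨h₁, h₂⟩ | ⟨h₁, h₂⟩ | ⟨h₁, h₂⟩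
    · exact Or.inl ⟨h₁.symm, h₂.symm⟩
    · exact Or.inr (Or.inl ⟨h₁.symm, h₂.symm⟩)
    · exact Or.inr (Or.inr ⟨h₁.symm, h₂.symm⟩)
  loopless := .mk fun p h => by
    rcases h with ⟨h₁, _⟩ | ⟨_, h₂⟩ | ⟨_, h₁⟩
    · exact G.loopless.irrefl p.1 h₁
    · exact H.loopless.irrefl p.2 h₂
    · exact G.loopless.irrefl p.1 h₁

/-- The lexicographic product (composition) `G[H]`. -/
def lexProd {α β : Type*} (G : SimpleGraph α) (H : SimpleGraph β) :
    SimpleGraph (α × β) where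
  Adj p q := G.Adj p.1 q.1 ∨ (p.1 = q.1 ∧ H.Adj p.2 q.2)
  symm := .mk fun p q h => by
    rcases h with h₁ | ⟨h₁, h₂⟩
    · exact Or.inl h₁.symm
    · exact Or.inr ⟨h₁.symm, h₂.symm⟩
  loopless := .mk fun p h => by
    rcases h with h₁ | ⟨_, h₂⟩
    · exact G.loopless.irrefl p.1 h₁
    · exact H.loopless.irrefl p.2 h₂

/-
Since `G ⊗ H` is the tensor product of `G` with `H` plus a loop at every vertex, an edge
`(u, v) — (u', v')` of `G ⊗ H` is an edge `uu'` of `G` together with a pair `(v, v')` with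
`v = v'` or `vv'` an edge of `H`. These pairs form an `(r + 1)`-regular bipartite graph, so by
König's theorem (via Hall) they split into `r + 1` permutations `σ` of the vertices of `H`.
Orient the edges of `G` by a linear order on its vertices. Each perfect matching `M` of `G` and
each `σ` give the perfect matching of `G ⊗ H` joining `(u, v)` to `(u', σ v)` whenever
`uu' ∈ M` and `u < u'`, and these matchings partition the edges of `G ⊗ H`.
-/

open Finset

section PermDecomposition

variable {β : Type*} [Fintype β] (R : β → β → Prop) [DecidableRel R]

theorem exists_perm_forall_rel_of_regular {k : ℕ} (hk : 0 < k)
    (hrow : ∀ v, #{w | R v w} = k) (hcol : ∀ w, #{v | R v w} = k) :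
    ∃ g : Equiv.Perm β, ∀ v, R v (g v) := by
  have hall : ∀ A : Finset β, #A ≤ #{w | ∃ v ∈ A, R v w} := by
    intro A
    set T : Finset β := {w | ∃ v ∈ A, R v w}
    -- double count the pairs of `R` between `A` and its neighbourhood `T`
    refine Nat.le_of_mul_le_mul_right (card_mul_le_card_mul R (s := A) (t := T) ?_ ?_) hk
    · intro v hv
      refine (hrow v).symm.le.trans (card_le_card fun w hw => ?_)
      simp only [mem_filter, mem_univ, true_and] at hw
      exact (mem_bipartiteAbove R).2 ⟨mem_filter.2 ⟨mem_univ _, v, hv, hw⟩, hw⟩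
    · intro w _
      refine (card_le_card fun v hv => ?_).trans (hcol w).le
      simpa using ((mem_bipartiteBelow R).1 hv).2
  obtain ⟨g, hg, hgR⟩ := (Fintype.all_card_le_filter_rel_iff_exists_injective R).1 hall
  exact ⟨Equiv.ofBijective g (Finite.injective_iff_bijective.1 hg), hgR⟩

theorem card_filter_rel_and_ne_perm [DecidableEq β] {k : ℕ} (g : Equiv.Perm β)
    (hg : ∀ v, R v (g v)) (hrow : ∀ v, #{w | R v w} = k + 1) (hcol : ∀ w, #{v | R v w} = k + 1) :
    (∀ v, #{w | R v w ∧ w ≠ g v} = k) ∧ (∀ w, #{v | R v w ∧ w ≠ g v} = k) := by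
  constructor
  · intro v
    have : ({w | R v w ∧ w ≠ g v} : Finset β) = ({w | R v w} : Finset β).erase (g v) := by
      ext w; simp [and_comm]
    rw [this, card_erase_of_mem (by simpa using hg v), hrow]; rfl
  · intro w
    have : ({v | R v w ∧ w ≠ g v} : Finset β) = ({v | R v w} : Finset β).erase (g.symm w) := by
      ext v; simp [and_comm, Equiv.eq_symm_apply, eq_comm]
    rw [this, card_erase_of_mem (by simpa using hg (g.symm w)), hcol]; rfl

/-- König's theorem, for the bipartite graph `R` between two copies of `β`. -/
theorem exists_perm_decomposition_of_regular [DecidableEq β] (k : ℕ)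
    (hrow : ∀ v, #{w | R v w} = k) (hcol : ∀ w, #{v | R v w} = k) :
    ∃ σ : Fin k → Equiv.Perm β, (∀ j v, R v (σ j v)) ∧ ∀ v w, R v w → ∃! j, σ j v = w := by
  induction k generalizing R with
  | zero =>
    refine ⟨Fin.elim0, fun j => j.elim0, fun v w hvw => ?_⟩
    have := card_eq_zero.1 (hrow v)
    exact absurd (mem_filter.2 ⟨mem_univ w, hvw⟩) (by simp [this])
  | succ k ih =>
    obtain ⟨g, hg⟩ := exists_perm_forall_rel_of_regular R k.succ_pos hrow hcol
    obtain ⟨hrow', hcol'⟩ := card_filter_rel_and_ne_perm R g hg hrow hcol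
    obtain ⟨σ, hσ, hσuniq⟩ := ih (fun v w => R v w ∧ w ≠ g v) hrow' hcol'
    refine ⟨Fin.cons g σ, Fin.cases hg fun j v => (hσ j v).1, fun v w hvw => ?_⟩
    by_cases hw : w = g v
    · refine ⟨0, hw.symm, fun j hj => ?_⟩
      rcases Fin.eq_zero_or_eq_succ j with rfl | ⟨j, rfl⟩
      · rfl
      · exact absurd (hw ▸ hj) (hσ j v).2
    · obtain ⟨j, hj, hjuniq⟩ := hσuniq v w ⟨hvw, hw⟩
      refine ⟨j.succ, hj, fun i hi => ?_⟩
      rcases Fin.eq_zero_or_eq_succ i with rfl | ⟨i, rfl⟩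
      · exact absurd hi.symm hw
      · rw [hjuniq i hi]

end PermDecomposition

theorem IsRegularGraph.card_filter_eq_or_adj {β : Type*} [Fintype β] [DecidableEq β]
    {H : SimpleGraph β} [DecidableRel H.Adj] {r : ℕ} (hH : IsRegularGraph H r) (v : β) :
    #{w | v = w ∨ H.Adj v w} = r + 1 := by
  have : ({w | v = w ∨ H.Adj v w} : Finset β) = insert v (H.neighborFinset v) := by
    ext w; simp [eq_comm]
  rw [this, card_insert_of_notMem (by simp), neighborFinset, ← Set.ncard_eq_toFinset_card',
    hH v]

theorem IsRegularGraph.card_filter_eq_or_adj' {β : Type*} [Fintype β] [DecidableEq β]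
    {H : SimpleGraph β} [DecidableRel H.Adj] {r : ℕ} (hH : IsRegularGraph H r) (w : β) :
    #{v | v = w ∨ H.Adj v w} = r + 1 := by
  simpa only [eq_comm, H.adj_comm] using hH.card_filter_eq_or_adj w

theorem strongTensorProd_adj {α β : Type*} {G : SimpleGraph α} {H : SimpleGraph β}
    {p q : α × β} :
    (strongTensorProd G H).Adj p q ↔ G.Adj p.1 q.1 ∧ (p.2 = q.2 ∨ H.Adj p.2 q.2) := by
  simp only [strongTensorProd]
  tauto

section StrongTensorMatching

variable {α β : Type*} [LinearOrder α] {G : SimpleGraph α} {H : SimpleGraph β}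

def strongTensorMatching (M : G.Subgraph) (σ : Equiv.Perm β)
    (hσ : ∀ v, v = σ v ∨ H.Adj v (σ v)) : (strongTensorProd G H).Subgraph where
  verts := Set.univ
  Adj p q := M.Adj p.1 q.1 ∧ (p.1 < q.1 ∧ q.2 = σ p.2 ∨ q.1 < p.1 ∧ p.2 = σ q.2)
  adj_sub := by
    rintro p q ⟨hM, ⟨-, hq⟩ | ⟨-, hp⟩⟩
    · exact strongTensorProd_adj.2 ⟨M.adj_sub hM, hq ▸ hσ p.2⟩
    · refine strongTensorProd_adj.2 ⟨M.adj_sub hM, ?_⟩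
      rw [hp]
      exact (hσ q.2).imp Eq.symm fun h => h.symm
  edge_vert _ := Set.mem_univ _
  symm := ⟨fun _ _ ⟨hM, h⟩ => ⟨hM.symm, h.symm⟩⟩

variable {M : G.Subgraph} {σ : Equiv.Perm β} {hσ : ∀ v, v = σ v ∨ H.Adj v (σ v)} {p q : α × β}

theorem strongTensorMatching_adj_of_lt (h : p.1 < q.1) :
    (strongTensorMatching M σ hσ).Adj p q ↔ M.Adj p.1 q.1 ∧ q.2 = σ p.2 := by
  simp [strongTensorMatching, h, h.not_gt]

theorem strongTensorMatching_adj_of_gt (h : q.1 < p.1) :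
    (strongTensorMatching M σ hσ).Adj p q ↔ M.Adj p.1 q.1 ∧ p.2 = σ q.2 := by
  simp [strongTensorMatching, h, h.not_gt]

theorem isPerfectMatching_strongTensorMatching (hM : M.IsPerfectMatching) :
    (strongTensorMatching M σ hσ).IsPerfectMatching := by
  rw [Subgraph.isPerfectMatching_iff]
  rintro ⟨u, v⟩
  obtain ⟨u', hu', huniq⟩ := Subgraph.isPerfectMatching_iff.1 hM u
  rcases (M.adj_sub hu').ne.lt_or_gt with h | h
  · refine ⟨(u', σ v), (strongTensorMatching_adj_of_lt h).2 ⟨hu', rfl⟩, ?_⟩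
    rintro ⟨u₂, v₂⟩ hq
    obtain rfl := huniq u₂ hq.1
    exact Prod.ext rfl ((strongTensorMatching_adj_of_lt h).1 hq).2
  · refine ⟨(u', σ.symm v), (strongTensorMatching_adj_of_gt h).2 ⟨hu', by simp⟩, ?_⟩
    rintro ⟨u₂, v₂⟩ hq
    obtain rfl := huniq u₂ hq.1
    exact Prod.ext rfl (σ.eq_symm_apply.2 ((strongTensorMatching_adj_of_gt h).1 hq).2.symm)

theorem existsUnique_strongTensorMatching_mem_edgeSet {ι κ : Type*} {f : ι → G.Subgraph}
    (hf : ∀ e ∈ G.edgeSet, ∃! i, e ∈ (f i).edgeSet) {σ : κ → Equiv.Perm β}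
    (hσ : ∀ j v, v = σ j v ∨ H.Adj v (σ j v))
    (hσuniq : ∀ v w, v = w ∨ H.Adj v w → ∃! j, σ j v = w)
    {e : Sym2 (α × β)} (he : e ∈ (strongTensorProd G H).edgeSet) :
    ∃! ij : ι × κ, e ∈ (strongTensorMatching (f ij.1) (σ ij.2) (hσ ij.2)).edgeSet := by
  induction e using Sym2.ind with | _ p q => ?_
  wlog h : p.1 < q.1 generalizing p q
  · have hne := (strongTensorProd_adj.1 he).1.ne
    simpa only [Sym2.eq_swap] using
      this q p (by rwa [Sym2.eq_swap]) ((not_lt.1 h).lt_of_ne hne.symm)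
  obtain ⟨huq, hvw⟩ := strongTensorProd_adj.1 he
  obtain ⟨i, hi, hiuniq⟩ := hf s(p.1, q.1) huq
  obtain ⟨j, hj, hjuniq⟩ := hσuniq p.2 q.2 hvw
  simp only [Subgraph.mem_edgeSet, strongTensorMatching_adj_of_lt h]
  exact ⟨(i, j), ⟨hi, hj.symm⟩,
    fun ij hij => Prod.ext (hiuniq ij.1 hij.1) (hjuniq ij.2 hij.2.symm)⟩

end StrongTensorMatching

theorem isOneFactorable_of_existsUnique {V ι : Type*} [Finite ι] {G : SimpleGraph V}
    (f : ι → G.Subgraph) (hf : ∀ i, (f i).IsPerfectMatching)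
    (huniq : ∀ e ∈ G.edgeSet, ∃! i, e ∈ (f i).edgeSet) : IsOneFactorable G := by
  obtain ⟨n, ⟨e⟩⟩ := Finite.exists_equiv_fin ι
  exact ⟨n, f ∘ e.symm, fun i => hf _, fun x hx => e.symm.existsUnique_congr_right.2 (huniq x hx)⟩

theorem strongTensorProd_oneFactorable_general {α β : Type*} [Fintype β]
    (G : SimpleGraph α) (H : SimpleGraph β) (r : ℕ)
    (hG : IsOneFactorable G) (hH : IsRegularGraph H r) :
    IsOneFactorable (strongTensorProd G H) := by
  classical
  let : LinearOrder α := linearOrderOfSTO WellOrderingRel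
  obtain ⟨n, f, hf, hfuniq⟩ := hG
  obtain ⟨σ, hσ, hσuniq⟩ := exists_perm_decomposition_of_regular (fun v w => v = w ∨ H.Adj v w)
    (r + 1) hH.card_filter_eq_or_adj hH.card_filter_eq_or_adj'
  exact isOneFactorable_of_existsUnique _
    (fun ij : Fin n × Fin (r + 1) => isPerfectMatching_strongTensorMatching (hf ij.1))
    (fun _ he => existsUnique_strongTensorMatching_mem_edgeSet hfuniq hσ hσuniq he)

/-- If `G` is 1-factorable and `H` is regular, then `G ⊗ H` is 1-factorable. -/
theorem strongTensorProd_oneFactorable {α β : Type*} [Fintype α] [Fintype β]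
    (G : SimpleGraph α) (H : SimpleGraph β) (r : ℕ)
    (hG : IsOneFactorable G) (hH : IsRegularGraph H r) :
    IsOneFactorable (strongTensorProd G H) :=
  strongTensorProd_oneFactorable_general G H r hG hH
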